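/- Let β ∈ ℝ and define Ψ_β : ℝ → ℝ by Ψ_β(x) = (1/π)·sin(π·(0.3·sin(πx) + x)) + 0.3·sin(πx) + x + β. Then Ψ_β is strictly monotone increasing on ℝ; in particular it has no local maxima or minima. -/

import Mathlib

/-!
Write `Ψ_β = f ∘ g + β` with `g x = 0.3 sin (π x) + x` and `f y = (1/π) sin (π y) + y`.
Both are of the form `x ↦ c sin (k x) + x` with `|c| k ≤ 1`, and such a map is strictly
increasing because `sin` is strictly 1-Lipschitz: `|sin x - sin y| < |x - y|` for `x ≠ y`.
-/

open Real

lemma abs_sin_sub_sin_lt {x y : ℝ} (hxy : x ≠ y) : |sin x - sin y| < |x - y| := by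
  have hhalf : (x - y) / 2 ≠ 0 := div_ne_zero (sub_ne_zero.2 hxy) two_ne_zero
  rw [sin_sub_sin, abs_mul, abs_mul, abs_two]
  calc 2 * |sin ((x - y) / 2)| * |cos ((x + y) / 2)|
      ≤ 2 * |sin ((x - y) / 2)| := mul_le_of_le_one_right (by positivity) (abs_cos_le_one _)
    _ < 2 * |(x - y) / 2| := by gcongr; exact abs_sin_lt_abs hhalf
    _ = |x - y| := by rw [abs_div, abs_two]; ring

theorem strictMono_mul_sin_add_self {c k : ℝ} (hk : 0 < k) (hck : |c| * k ≤ 1) :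
    StrictMono fun x => c * sin (k * x) + x := by
  intro a b hab
  set d := sin (k * b) - sin (k * a)
  have hd : |d| < k * (b - a) := by
    have := abs_sin_sub_sin_lt (mul_lt_mul_of_pos_left hab hk).ne'
    rwa [← mul_sub, abs_mul, abs_of_pos hk, abs_of_pos (sub_pos.2 hab)] at this
  have hcd : |c * d| < b - a :=
    calc |c * d| = |c| * |d| := abs_mul c d
      _ ≤ |d| / k := by rw [le_div_iff₀ hk]; nlinarith [abs_nonneg d]
      _ < b - a := by rw [div_lt_iff₀ hk]; linarith
  have : -(b - a) < c * sin (k * b) - c * sin (k * a) := by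
    rw [← mul_sub]; exact (abs_lt.1 hcd).1
  dsimp only
  linarith

/-- The family `Ψ_β(x) = (1/π) sin (π (0.3 sin (π x) + x)) + 0.3 sin (π x) + x + β`
is strictly monotone increasing on `ℝ`. -/
theorem stmt_5 (β : ℝ) (Ψ : ℝ → ℝ)
    (hΨ : ∀ x : ℝ, Ψ x =
      (1 / π) * Real.sin (π * (0.3 * Real.sin (π * x) + x)) +
        0.3 * Real.sin (π * x) + x + β) :
    StrictMono Ψ := by
  have hg : StrictMono fun x => (0.3 : ℝ) * sin (π * x) + x :=
    strictMono_mul_sin_add_self pi_pos <| by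
      rw [abs_of_pos (by norm_num)]; linarith [pi_lt_d2]
  have hf : StrictMono fun y => (1 / π) * sin (π * y) + y :=
    strictMono_mul_sin_add_self pi_pos <| by
      rw [abs_of_pos (by positivity), one_div_mul_cancel pi_ne_zero]
  intro a b hab
  have := hf (hg hab)
  simp only [hΨ] at this ⊢
  linarith
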